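/- arXiv:1610.04399 — 2 statements merged into one kernel-verified Lean document; each statement's English description precedes it below -/
import Mathlib

section
/- Let n ≥ 3 and let ξ ∈ ℝⁿ satisfy: for every l ∈ {1,…,n−1}, Σ_{k=1, k≠l}^{n−1} ξ_k² > 0. Then for every pair j, k ∈ {1,…,n} there exist real numbers α, β and unit vectors μ₁, μ₂ ∈ ℝⁿ such that ξ·μ₁ = ξ·μ₂ = μ₁·μ₂ = 0, the last coordinate of μ₂ is zero (i.e. μ₂* = μ₂), μ₁ = −(ξ_n/|ξ|) e(1) + (|ξ'|/|ξ|) e_n, and ξ_j e_k − ξ_k e_j = α μ₁ + β μ₂. -/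
/-!
With `ξ' = ξ - ⟪e, ξ⟫ e` the component of `ξ` orthogonal to the unit vector `e`, the vector
`μ₁ = -(⟪e, ξ⟫/|ξ|) ξ'/|ξ'| + (|ξ'|/|ξ|) e` is the unit vector of `span {ξ, e}` orthogonal to `ξ`,
and `e = (⟪e, ξ⟫/|ξ|²) ξ + (|ξ'|/|ξ|) μ₁`. Hence a vector orthogonal to `ξ` is orthogonal to `μ₁`
exactly when it is orthogonal to `e`. Now `v = ξ_j e_k - ξ_k e_j` is orthogonal to `ξ`, so
`v - ⟪μ₁, v⟫ μ₁` lies in `{ξ, μ₁}ᗮ = {ξ, e_n}ᗮ` and is a multiple of a unit vector `μ₂` there.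
Such a `μ₂` exists even when `v - ⟪μ₁, v⟫ μ₁ = 0`, since for `n ≥ 3` and `ξ' ≠ 0` the space
`{ξ, e_n}ᗮ` contains `ξ_b e_a - ξ_a e_b` for suitable `a ≠ b < n`.
-/

open MeasureTheory Filter Complex
open scoped ENNReal RealInnerProductSpace

noncomputable section

/-- The last index of `Fin n` (i.e. the `n`-th coordinate). -/
def lastIdx (n : ℕ) (hn : 0 < n) : Fin n := ⟨n - 1, Nat.sub_lt hn one_pos⟩

/-- `|ξ'|`, the Euclidean norm of the first `n-1` coordinates of `ξ`. -/
def xiPrimeNorm (n : ℕ) (ξ : EuclideanSpace ℝ (Fin n)) : ℝ :=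
  Real.sqrt (∑ i ∈ Finset.univ.filter (fun i : Fin n => (i : ℕ) < n - 1), ξ i ^ 2)

/-- `e(1) := (ξ'/|ξ'|, 0)`. -/
def eOneVec (n : ℕ) (ξ : EuclideanSpace ℝ (Fin n)) : EuclideanSpace ℝ (Fin n) :=
  WithLp.toLp 2 (fun i => if (i : ℕ) < n - 1 then ξ i / xiPrimeNorm n ξ else 0)

/-- `μ₁ := -(ξ_n/|ξ|) e(1) + (|ξ'|/|ξ|) e_n`. -/
def muOneVec (n : ℕ) (hn : 0 < n) (ξ : EuclideanSpace ℝ (Fin n)) :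
    EuclideanSpace ℝ (Fin n) :=
  (-(ξ (lastIdx n hn) / ‖ξ‖)) • eOneVec n ξ +
    (xiPrimeNorm n ξ / ‖ξ‖) • EuclideanSpace.single (lastIdx n hn) (1 : ℝ)

lemma Submodule.exists_norm_eq_one_and_eq_smul {F : Type*} [NormedAddCommGroup F]
    [NormedSpace ℝ F] {K : Submodule ℝ F} {w u : F} (hw : w ∈ K) (hu : u ∈ K) (hu0 : u ≠ 0) :
    ∃ μ ∈ K, ‖μ‖ = 1 ∧ ∃ β : ℝ, w = β • μ := by
  by_cases hw0 : w = 0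
  · exact ⟨(‖u‖⁻¹ : ℝ) • u, K.smul_mem _ hu, norm_smul_inv_norm hu0, 0, by simp [hw0]⟩
  · exact ⟨(‖w‖⁻¹ : ℝ) • w, K.smul_mem _ hw, norm_smul_inv_norm hw0, ‖w‖,
      (smul_inv_smul₀ (norm_ne_zero_iff.mpr hw0) w).symm⟩

section UnitPerpInSpan

variable {E : Type*} [NormedAddCommGroup E] [InnerProductSpace ℝ E]

def unitPerpInSpan (ξ e : E) : E :=
  (-(⟪e, ξ⟫ / ‖ξ‖)) • (‖ξ - ⟪e, ξ⟫ • e‖⁻¹ • (ξ - ⟪e, ξ⟫ • e)) +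
    (‖ξ - ⟪e, ξ⟫ • e‖ / ‖ξ‖) • e

variable {ξ e : E}

lemma inner_sub_inner_smul_self_of_norm_eq_one (he : ‖e‖ = 1) (x : E) :
    ⟪x - ⟪e, x⟫ • e, e⟫ = 0 := by
  rw [inner_sub_left, real_inner_smul_left, real_inner_self_eq_norm_sq, he, real_inner_comm]
  ring

lemma norm_sq_eq_norm_sub_sq_add_inner_sq (he : ‖e‖ = 1) :
    ‖ξ‖ ^ 2 = ‖ξ - ⟪e, ξ⟫ • e‖ ^ 2 + ⟪e, ξ⟫ ^ 2 := by
  have h := norm_add_sq_eq_norm_sq_add_norm_sq_real (x := ξ - ⟪e, ξ⟫ • e) (y := ⟪e, ξ⟫ • e)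
    (by rw [real_inner_smul_right, inner_sub_inner_smul_self_of_norm_eq_one he, mul_zero])
  rw [sub_add_cancel, norm_smul, he, mul_one, Real.norm_eq_abs, abs_mul_abs_self] at h
  rw [sq, h, sq, sq]

lemma inner_self_sub_inner_smul_eq_norm_sq (he : ‖e‖ = 1) :
    ⟪ξ, ξ - ⟪e, ξ⟫ • e⟫ = ‖ξ - ⟪e, ξ⟫ • e‖ ^ 2 := by
  rw [← real_inner_self_eq_norm_sq, inner_sub_left _ _ (ξ - ⟪e, ξ⟫ • e), real_inner_smul_left,
    real_inner_comm (ξ - ⟪e, ξ⟫ • e) e, inner_sub_inner_smul_self_of_norm_eq_one he, mul_zero,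
    sub_zero]

lemma norm_ne_zero_of_sub_inner_smul_ne_zero (hp : ξ - ⟪e, ξ⟫ • e ≠ 0) : ‖ξ‖ ≠ 0 := by
  rintro h
  exact hp (by simp [norm_eq_zero.mp h])

lemma inner_unitPerpInSpan (he : ‖e‖ = 1) : ⟪ξ, unitPerpInSpan ξ e⟫ = 0 := by
  rcases eq_or_ne ‖ξ - ⟪e, ξ⟫ • e‖ 0 with hs | hs
  · simp [unitPerpInSpan, hs]
  simp only [unitPerpInSpan, inner_add_right, real_inner_smul_right,
    inner_self_sub_inner_smul_eq_norm_sq he, real_inner_comm e]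
  field_simp
  ring

lemma norm_unitPerpInSpan (he : ‖e‖ = 1) (hp : ξ - ⟪e, ξ⟫ • e ≠ 0) :
    ‖unitPerpInSpan ξ e‖ = 1 := by
  have hs : ‖ξ - ⟪e, ξ⟫ • e‖ ≠ 0 := norm_ne_zero_iff.mpr hp
  have hr : ‖ξ‖ ≠ 0 := norm_ne_zero_of_sub_inner_smul_ne_zero hp
  have h := norm_add_sq_eq_norm_sq_add_norm_sq_real
    (x := (-(⟪e, ξ⟫ / ‖ξ‖)) • (‖ξ - ⟪e, ξ⟫ • e‖⁻¹ • (ξ - ⟪e, ξ⟫ • e)))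
    (y := (‖ξ - ⟪e, ξ⟫ • e‖ / ‖ξ‖) • e)
    (by simp only [real_inner_smul_left, real_inner_smul_right,
          inner_sub_inner_smul_self_of_norm_eq_one he, mul_zero])
  rw [← unitPerpInSpan] at h
  simp only [norm_smul, norm_inv, norm_div, norm_neg, Real.norm_eq_abs, abs_norm,
    he, mul_one] at h
  rw [← pow_eq_one_iff_of_nonneg (norm_nonneg _) two_ne_zero, sq, h]
  field_simp
  rw [sq_abs]
  linear_combination (norm_sq_eq_norm_sub_sq_add_inner_sq (ξ := ξ) he).symm

lemma inner_unitPerpInSpan_eq_zero_iff (he : ‖e‖ = 1) (hp : ξ - ⟪e, ξ⟫ • e ≠ 0) {x : E}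
    (hx : ⟪ξ, x⟫ = 0) : ⟪unitPerpInSpan ξ e, x⟫ = 0 ↔ ⟪e, x⟫ = 0 := by
  have hs : ‖ξ - ⟪e, ξ⟫ • e‖ ≠ 0 := norm_ne_zero_iff.mpr hp
  have hr := norm_ne_zero_of_sub_inner_smul_ne_zero hp
  have key : ⟪unitPerpInSpan ξ e, x⟫ = ‖ξ‖ / ‖ξ - ⟪e, ξ⟫ • e‖ * ⟪e, x⟫ := by
    simp only [unitPerpInSpan, inner_add_left, real_inner_smul_left, inner_sub_left, hx]
    field_simp
    linear_combination ⟪e, x⟫ * (norm_sq_eq_norm_sub_sq_add_inner_sq (ξ := ξ) he).symm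
  rw [key, mul_eq_zero, or_iff_right (div_ne_zero hr hs)]

lemma exists_eq_smul_unitPerpInSpan_add_smul (he : ‖e‖ = 1) (hp : ξ - ⟪e, ξ⟫ • e ≠ 0)
    {u : E} (hu0 : u ≠ 0) (hξu : ⟪ξ, u⟫ = 0) (heu : ⟪e, u⟫ = 0) {v : E} (hξv : ⟪ξ, v⟫ = 0) :
    ∃ (α β : ℝ) (μ₂ : E), ‖μ₂‖ = 1 ∧ ⟪ξ, μ₂⟫ = 0 ∧ ⟪unitPerpInSpan ξ e, μ₂⟫ = 0 ∧
      ⟪e, μ₂⟫ = 0 ∧ v = α • unitPerpInSpan ξ e + β • μ₂ := by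
  set μ₁ := unitPerpInSpan ξ e
  let K : Submodule ℝ E := (ℝ ∙ ξ)ᗮ ⊓ (ℝ ∙ μ₁)ᗮ
  have mem_K : ∀ x, x ∈ K ↔ ⟪ξ, x⟫ = 0 ∧ ⟪μ₁, x⟫ = 0 := fun x => by
    simp only [K, Submodule.mem_inf, Submodule.mem_orthogonal_singleton_iff_inner_right]
  have hw : v - ⟪μ₁, v⟫ • μ₁ ∈ K := by
    refine (mem_K _).mpr ⟨?_, ?_⟩
    · rw [inner_sub_right, real_inner_smul_right, inner_unitPerpInSpan he, hξv, mul_zero,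
        sub_zero]
    · rw [real_inner_comm]
      exact inner_sub_inner_smul_self_of_norm_eq_one (norm_unitPerpInSpan he hp) v
  have hu : u ∈ K := (mem_K u).mpr ⟨hξu, (inner_unitPerpInSpan_eq_zero_iff he hp hξu).mpr heu⟩
  obtain ⟨μ₂, hμ₂K, hμ₂, β, hβ⟩ := K.exists_norm_eq_one_and_eq_smul hw hu hu0
  obtain ⟨hξμ₂, hμ₁μ₂⟩ := (mem_K μ₂).mp hμ₂K
  refine ⟨⟪μ₁, v⟫, β, μ₂, hμ₂, hξμ₂, hμ₁μ₂,
    (inner_unitPerpInSpan_eq_zero_iff he hp hξμ₂).mp hμ₁μ₂, ?_⟩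
  rw [← hβ]
  abel

end UnitPerpInSpan

lemma inner_smul_single_sub_smul_single {ι : Type*} [Fintype ι] [DecidableEq ι]
    (ξ : EuclideanSpace ℝ ι) (j k : ι) :
    ⟪ξ, ξ j • EuclideanSpace.single k (1 : ℝ) - ξ k • EuclideanSpace.single j (1 : ℝ)⟫ = 0 := by
  simp only [inner_sub_right, real_inner_smul_right, EuclideanSpace.inner_single_right,
    one_mul, starRingEnd_apply, star_trivial]
  ring

section LastCoordinate

variable {n : ℕ} (hn : 0 < n)

lemma lt_sub_one_iff_ne_lastIdx (i : Fin n) : (i : ℕ) < n - 1 ↔ i ≠ lastIdx n hn := by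
  simp only [Ne, Fin.ext_iff, lastIdx]
  omega

lemma sub_inner_single_lastIdx_smul_apply (ξ : EuclideanSpace ℝ (Fin n)) (i : Fin n) :
    (ξ - ⟪EuclideanSpace.single (lastIdx n hn) 1, ξ⟫ • EuclideanSpace.single (lastIdx n hn) 1 :
      EuclideanSpace ℝ (Fin n)) i = if (i : ℕ) < n - 1 then ξ i else 0 := by
  by_cases h : i = lastIdx n hn
  · simp [h, lt_sub_one_iff_ne_lastIdx hn, EuclideanSpace.inner_single_left]
  · simp [h, lt_sub_one_iff_ne_lastIdx hn]

lemma xiPrimeNorm_eq (ξ : EuclideanSpace ℝ (Fin n)) :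
    xiPrimeNorm n ξ =
      ‖ξ - ⟪EuclideanSpace.single (lastIdx n hn) 1, ξ⟫ • EuclideanSpace.single (lastIdx n hn) 1‖ := by
  rw [xiPrimeNorm, EuclideanSpace.norm_eq, Finset.sum_filter]
  congr 1
  refine Finset.sum_congr rfl fun i _ => ?_
  rw [sub_inner_single_lastIdx_smul_apply]
  split_ifs <;> simp

lemma eOneVec_eq (ξ : EuclideanSpace ℝ (Fin n)) :
    eOneVec n ξ = (xiPrimeNorm n ξ)⁻¹ •
      (ξ - ⟪EuclideanSpace.single (lastIdx n hn) 1, ξ⟫ • EuclideanSpace.single (lastIdx n hn) 1) := by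
  ext i
  rw [PiLp.smul_apply, sub_inner_single_lastIdx_smul_apply, eOneVec]
  split_ifs <;> simp [div_eq_inv_mul, *]

lemma muOneVec_eq (ξ : EuclideanSpace ℝ (Fin n)) :
    muOneVec n hn ξ = unitPerpInSpan ξ (EuclideanSpace.single (lastIdx n hn) 1) := by
  rw [muOneVec, eOneVec_eq hn, xiPrimeNorm_eq hn, unitPerpInSpan, EuclideanSpace.inner_single_left,
    map_one, one_mul]

lemma sub_inner_single_lastIdx_smul_ne_zero {ξ : EuclideanSpace ℝ (Fin n)} {b : Fin n}
    (hb : (b : ℕ) < n - 1) (hξb : ξ b ≠ 0) :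
    ξ - ⟪EuclideanSpace.single (lastIdx n hn) 1, ξ⟫ • EuclideanSpace.single (lastIdx n hn) 1 ≠ 0 :=
  fun h => hξb <| by
    have := congrArg (· b) h
    rwa [sub_inner_single_lastIdx_smul_apply hn, if_pos hb, PiLp.zero_apply] at this

lemma exists_ne_zero_inner_eq_zero_inner_single_lastIdx_eq_zero (ξ : EuclideanSpace ℝ (Fin n))
    {a b : Fin n} (ha : (a : ℕ) < n - 1) (hb : (b : ℕ) < n - 1) (hab : a ≠ b) (hξb : ξ b ≠ 0) :
    ∃ u : EuclideanSpace ℝ (Fin n), u ≠ 0 ∧ ⟪ξ, u⟫ = 0 ∧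
      ⟪EuclideanSpace.single (lastIdx n hn) 1, u⟫ = 0 := by
  refine ⟨ξ b • EuclideanSpace.single a 1 - ξ a • EuclideanSpace.single b 1, fun h => hξb ?_,
    inner_smul_single_sub_smul_single ξ b a, ?_⟩
  · simpa [hab] using congrArg (· a) h
  · have hNa := ((lt_sub_one_iff_ne_lastIdx hn a).mp ha).symm
    have hNb := ((lt_sub_one_iff_ne_lastIdx hn b).mp hb).symm
    simp [EuclideanSpace.inner_single_left, hNa, hNb]

end LastCoordinate

theorem stmt1 (n : ℕ) (hn : 3 ≤ n) (ξ : EuclideanSpace ℝ (Fin n))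
    (hξ : ∀ l : Fin n, (l : ℕ) < n - 1 →
      0 < ∑ k ∈ Finset.univ.filter (fun k : Fin n => (k : ℕ) < n - 1 ∧ k ≠ l), ξ k ^ 2) :
    ∀ j k : Fin n, ∃ (α β : ℝ) (μ₁ μ₂ : EuclideanSpace ℝ (Fin n)),
      ‖μ₁‖ = 1 ∧ ‖μ₂‖ = 1 ∧
      ⟪ξ, μ₁⟫ = 0 ∧ ⟪ξ, μ₂⟫ = 0 ∧ ⟪μ₁, μ₂⟫ = 0 ∧
      μ₂ (lastIdx n (by omega)) = 0 ∧
      μ₁ = muOneVec n (by omega) ξ ∧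
      ξ j • EuclideanSpace.single k (1 : ℝ) - ξ k • EuclideanSpace.single j (1 : ℝ) =
        α • μ₁ + β • μ₂ := by
  intro j k
  have hn0 : 0 < n := by omega
  have h0 : (0 : ℕ) < n - 1 := by omega
  set e := EuclideanSpace.single (lastIdx n hn0) (1 : ℝ)
  have he : ‖e‖ = 1 := by simp [e]
  obtain ⟨b, hb, hξb⟩ := Finset.exists_ne_zero_of_sum_ne_zero (hξ ⟨0, hn0⟩ h0).ne'
  simp only [Finset.mem_filter, Finset.mem_univ, true_and] at hb
  replace hξb : ξ b ≠ 0 := by simpa using hξb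
  have hp := sub_inner_single_lastIdx_smul_ne_zero hn0 hb.1 hξb
  obtain ⟨u, hu0, hξu, heu⟩ :=
    exists_ne_zero_inner_eq_zero_inner_single_lastIdx_eq_zero hn0 ξ h0 hb.1 hb.2.symm hξb
  obtain ⟨α, β, μ₂, hμ₂, hξμ₂, hμ₁μ₂, heμ₂, hv⟩ := exists_eq_smul_unitPerpInSpan_add_smul he hp
    hu0 hξu heu (inner_smul_single_sub_smul_single ξ j k)
  refine ⟨α, β, _, μ₂, norm_unitPerpInSpan he hp, hμ₂, inner_unitPerpInSpan he, hξμ₂, hμ₁μ₂, ?_,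
    (muOneVec_eq hn0 ξ).symm, hv⟩
  simpa [e, EuclideanSpace.inner_single_left] using heμ₂
end
end

section
/- Assume f ∈ L¹(ℝⁿ; ℂ) and there exist σ > 0, C₀ > 0 and s ∈ (0,1) such that ‖f(·+y) − f(·)‖_{L¹(ℝⁿ)} ≤ C₀ |y|^s whenever |y| < σ. Then there exist positive constants K and ε₀, depending only on ‖f‖_{L¹}, n, σ and s, such that for every 0 < ε < ε₀ and every ξ ∈ ℝⁿ, |f̂(ξ)| ≤ C₀ K (e^{−π ε² |ξ|²} + ε^s). -/
open MeasureTheory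
open scoped RealInnerProductSpace FourierTransform

noncomputable section

/-! Split the frequencies at `ε‖ξ‖ = 1/2`. At low frequencies the trivial bound `‖f̂(ξ)‖ ≤ ‖f‖₁`
is absorbed into `e^{π/4} e^{-π ε² ‖ξ‖²}`. At high frequencies, translating `f` by half a period
`y = ξ / (2‖ξ‖²)` of the character negates `f̂(ξ)`, so `2 f̂(ξ)` is the Fourier transform of
`f - f(· + y)`, whose `L¹` norm is at most `C₀ ‖y‖^s ≤ C₀ ε^s` because `‖y‖ = 1 / (2‖ξ‖) < ε`. -/

section

variable {V E : Type*} [NormedAddCommGroup V] [InnerProductSpace ℝ V] [MeasurableSpace V]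
  [BorelSpace V] [FiniteDimensional ℝ V] [NormedAddCommGroup E] [NormedSpace ℂ E] {f : V → E}

theorem norm_fourier_le_half_integral_norm_sub_translate (hf : Integrable f) {ξ : V}
    (hξ : ξ ≠ 0) :
    ‖𝓕 f ξ‖ ≤ 1 / 2 * ∫ v, ‖f (v + (1 / (2 * ‖ξ‖ ^ 2) : ℝ) • ξ) - f v‖ := by
  have h := fourierIntegral_eq_half_sub_half_period_translate hξ hf
  change ‖∫ v, 𝐞 (-⟪v, ξ⟫) • f v‖ ≤ _
  rw [h, norm_smul]
  refine le_of_le_of_eq (mul_le_mul_of_nonneg_left (norm_integral_le_integral_norm _)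
    (norm_nonneg _)) ?_
  simp_rw [Circle.norm_smul, norm_sub_rev (f _) (f (_ + _))]
  norm_num

theorem norm_fourier_le_integral_norm_mul_exp {ε : ℝ} (hε : 0 ≤ ε) {ξ : V}
    (hξ : ε * ‖ξ‖ ≤ 1 / 2) :
    ‖𝓕 f ξ‖ ≤
      (∫ v, ‖f v‖) * Real.exp (Real.pi / 4) * Real.exp (-Real.pi * ε ^ 2 * ‖ξ‖ ^ 2) := by
  have hexp : 1 ≤ Real.exp (Real.pi / 4) * Real.exp (-Real.pi * ε ^ 2 * ‖ξ‖ ^ 2) := by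
    have hsq : (ε * ‖ξ‖) ^ 2 ≤ 1 / 4 := by nlinarith [mul_nonneg hε (norm_nonneg ξ)]
    rw [← Real.exp_add, Real.one_le_exp_iff]
    nlinarith [Real.pi_pos]
  calc ‖𝓕 f ξ‖ ≤ ∫ v, ‖f v‖ := VectorFourier.norm_fourierIntegral_le_integral_norm _ _ _ _ _
    _ ≤ _ := by
      rw [mul_assoc]
      exact le_mul_of_one_le_right (integral_nonneg fun _ ↦ norm_nonneg _) hexp

theorem norm_fourier_le_of_integral_norm_sub_le {σ C s ε : ℝ} (hf : Integrable f)
    (hC : 0 ≤ C) (hs : 0 ≤ s)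
    (hmod : ∀ y : V, ‖y‖ < σ → (∫ x, ‖f (x + y) - f x‖) ≤ C * ‖y‖ ^ s)
    (hεσ : ε ≤ σ) {ξ : V} (hξ : 1 / 2 < ε * ‖ξ‖) :
    ‖𝓕 f ξ‖ ≤ C / 2 * ε ^ s := by
  have hξ0 : 0 < ‖ξ‖ := (norm_nonneg ξ).lt_of_ne' fun h ↦ by norm_num [h] at hξ
  set y : V := (1 / (2 * ‖ξ‖ ^ 2) : ℝ) • ξ
  have hy : ‖y‖ < ε := by
    rw [norm_smul, Real.norm_of_nonneg (one_div_nonneg.2 (by positivity))]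
    field_simp
    linarith
  calc ‖𝓕 f ξ‖ ≤ 1 / 2 * ∫ v, ‖f (v + y) - f v‖ :=
        norm_fourier_le_half_integral_norm_sub_translate hf (norm_pos_iff.1 hξ0)
    _ ≤ 1 / 2 * (C * ‖y‖ ^ s) := by gcongr; exact hmod y (hy.trans_le hεσ)
    _ ≤ C / 2 * ε ^ s := by
      rw [← mul_assoc, one_div_mul_eq_div]
      gcongr

theorem norm_fourier_le_exp_add_rpow {σ C s ε : ℝ} (hf : Integrable f) (hC : 0 ≤ C)
    (hs : 0 ≤ s) (hmod : ∀ y : V, ‖y‖ < σ → (∫ x, ‖f (x + y) - f x‖) ≤ C * ‖y‖ ^ s)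
    (hε : 0 ≤ ε) (hεσ : ε ≤ σ) (ξ : V) :
    ‖𝓕 f ξ‖ ≤ (∫ v, ‖f v‖) * Real.exp (Real.pi / 4) * Real.exp (-Real.pi * ε ^ 2 * ‖ξ‖ ^ 2)
      + C / 2 * ε ^ s := by
  have hI : 0 ≤ (∫ v, ‖f v‖) * Real.exp (Real.pi / 4) *
      Real.exp (-Real.pi * ε ^ 2 * ‖ξ‖ ^ 2) := by positivity
  have hCε : 0 ≤ C / 2 * ε ^ s := by positivity
  rcases le_or_gt (ε * ‖ξ‖) (1 / 2) with hlow | hhigh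
  · linarith [norm_fourier_le_integral_norm_mul_exp (f := f) hε hlow]
  · linarith [norm_fourier_le_of_integral_norm_sub_le hf hC hs hmod hεσ hhigh]

end

theorem stmt4_general (n : ℕ) (f : EuclideanSpace ℝ (Fin n) → ℂ)
    (hf : Integrable f volume)
    (σ C₀ s : ℝ) (hσ : 0 < σ) (hC₀ : 0 < C₀) (hs0 : 0 < s)
    (hmod : ∀ y : EuclideanSpace ℝ (Fin n), ‖y‖ < σ →
      (∫ x, ‖f (x + y) - f x‖) ≤ C₀ * ‖y‖ ^ s) :
    ∃ K ε₀ : ℝ, 0 < K ∧ 0 < ε₀ ∧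
      ∀ ε : ℝ, 0 < ε → ε < ε₀ → ∀ ξ : EuclideanSpace ℝ (Fin n),
        ‖𝓕 f ξ‖ ≤ C₀ * K * (Real.exp (-Real.pi * ε ^ 2 * ‖ξ‖ ^ 2) + ε ^ s) := by
  set A := (∫ x, ‖f x‖) * Real.exp (Real.pi / 4)
  have hA : 0 ≤ A := by positivity
  refine ⟨(A + C₀ / 2) / C₀, σ, by positivity, hσ, fun ε hε hεσ ξ ↦ ?_⟩
  rw [mul_div_cancel₀ _ hC₀.ne']
  have hexp := Real.exp_pos (-Real.pi * ε ^ 2 * ‖ξ‖ ^ 2)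
  have hεs : 0 ≤ ε ^ s := by positivity
  calc ‖𝓕 f ξ‖
      ≤ A * Real.exp (-Real.pi * ε ^ 2 * ‖ξ‖ ^ 2) + C₀ / 2 * ε ^ s :=
        norm_fourier_le_exp_add_rpow hf hC₀.le hs0.le hmod hε.le hεσ.le ξ
    _ ≤ (A + C₀ / 2) * (Real.exp (-Real.pi * ε ^ 2 * ‖ξ‖ ^ 2) + ε ^ s) := by
        nlinarith [mul_nonneg hA hεs, mul_nonneg hC₀.le hexp.le]

theorem stmt4 (n : ℕ) (f : EuclideanSpace ℝ (Fin n) → ℂ)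
    (hf : Integrable f volume)
    (σ C₀ s : ℝ) (hσ : 0 < σ) (hC₀ : 0 < C₀) (hs0 : 0 < s) (hs1 : s < 1)
    (hmod : ∀ y : EuclideanSpace ℝ (Fin n), ‖y‖ < σ →
      (∫ x, ‖f (x + y) - f x‖) ≤ C₀ * ‖y‖ ^ s) :
    ∃ K ε₀ : ℝ, 0 < K ∧ 0 < ε₀ ∧
      ∀ ε : ℝ, 0 < ε → ε < ε₀ → ∀ ξ : EuclideanSpace ℝ (Fin n),
        ‖𝓕 f ξ‖ ≤ C₀ * K * (Real.exp (-Real.pi * ε ^ 2 * ‖ξ‖ ^ 2) + ε ^ s) :=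
  stmt4_general n f hf σ C₀ s hσ hC₀ hs0 hmod
end
end
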